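/- Schemas built only from logical operators are trivial: let S be a closed schema all of whose subschemas are true, false, or objects whose keywords are among anyOf, allOf, oneOf, not, $ref, $dynamicRef, $anchor, $dynamicAnchor, $id, $defs. Then for every context C and all JSON instances J and J': if C,J ⊢S S → (r,κ) and C,J' ⊢S S → (r',κ') are derivable, then r = r' and κ = κ' = ∅; that is, the validation result does not depend on the instance and no annotations are produced. -/

import Mathlib

/-!
Formalization of the minimal fragment of Modern JSON Schema (Draft 2020-12)
following Attouche, Baazizi, Colazzo, Ghelli, Sartiani, Scherzinger,
"Validation of Modern JSON Schema: Formalization and Complexity".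
-/

namespace MJS

/-- JSON types. -/
inductive JTy : Type
  | null | boolean | number | string | array | object
  deriving DecidableEq

/-- JSON values: base values, arrays and objects (objects are supposed to have
pairwise distinct member names). -/
inductive JVal : Type
  | null : JVal
  | bool : Bool → JVal
  | num : ℚ → JVal
  | str : String → JVal
  | arr : List JVal → JVal
  | obj : List (String × JVal) → JVal

def typeOf : JVal → JTy
  | .null => .null
  | .bool _ => .boolean
  | .num _ => .number
  | .str _ => .string
  | .arr _ => .array
  | .obj _ => .object

-- Schemas of the minimal fragment: `true`, `false`, or an object of keywords.
mutual
  inductive Schema : Type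
    | tru : Schema
    | fls : Schema
    | obj : List Keyword → Schema

  inductive Keyword : Type
    | type : JTy → Keyword
    | minimum : ℚ → Keyword
    | pattern : String → Keyword
    | properties : List (String × Schema) → Keyword
    | patternProperties : List (String × Schema) → Keyword
    | anyOf : List Schema → Keyword
    | allOf : List Schema → Keyword
    | oneOf : List Schema → Keyword
    | not : Schema → Keyword
    | ref : String → String → Keyword
    | dynamicRef : String → String → Keyword
    | anchor : String → Keyword
    | dynamicAnchor : String → Keyword
    | id : String → Keyword
    | defs : List (String × Schema) → Keyword
    | additionalProperties : Schema → Keyword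
    | items : Schema → Keyword
    | unevaluatedProperties : Schema → Keyword
    | unevaluatedItems : Schema → Keyword
end

/-- Annotations: evaluated object member names, or evaluated array positions (1-based). -/
abbrev Ann := String ⊕ ℕ

/-- A context is a list of absolute URIs (without repetitions). -/
abbrev Ctx := List String

/-- Saturation `C +? u`. -/
def saturate (C : Ctx) (u : String) : Ctx := if u ∈ C then C else C ++ [u]

/-- The environment of a closed schema: `load` maps each absolute URI to its
resource, `get R f` returns the subschema of `R` named by the (static or
dynamic) anchor `f`, `dget R f` returns the subschema of `R` carrying
`$dynamicAnchor : f` (`none` if there is none), and `lang p s` tells whether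
the string `s` belongs to the language of the pattern `p`. -/
structure Env where
  load : String → Schema
  get : Schema → String → Option Schema
  dget : Schema → String → Option Schema
  lang : String → String → Bool

/-- `fstURI C f`: the first URI `u` of the list `C` with `dget (load u) f ≠ ⊥`. -/
def fstURI (E : Env) (C : Ctx) (f : String) : Option String :=
  C.find? fun u => (E.dget (E.load u) f).isSome

def Schema.keywords : Schema → List Keyword
  | .obj ks => ks
  | _ => []

/-- The four annotation-dependent keywords. -/
def Keyword.isDependent : Keyword → Bool
  | .additionalProperties _ => true
  | .items _ => true
  | .unevaluatedProperties _ => true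
  | .unevaluatedItems _ => true
  | _ => false

/-- `propsOf`: a member name `k` is directly matched by an adjacent
`properties`/`patternProperties` keyword of the list `Ks`. -/
def keyMatchedB (E : Env) (Ks : List Keyword) (k : String) : Bool :=
  Ks.any fun K =>
    match K with
    | .properties kvs => kvs.any fun kv => kv.1 == k
    | .patternProperties kvs => kvs.any fun kv => E.lang kv.1 k
    | _ => false

def objNames (members : List (String × JVal)) : Finset Ann :=
  (members.map fun m => (Sum.inl m.1 : Ann)).toFinset

def arrPositions (n : ℕ) : Finset Ann :=
  (Finset.range n).image fun i => (Sum.inr (i + 1) : Ann)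

def listUnion (l : List (Finset Ann)) : Finset Ann := l.foldr (· ∪ ·) ∅

/-- The pairs (member value, subschema) matched by a `properties` keyword. -/
def matchedPairs (members : List (String × JVal)) (kvs : List (String × Schema)) :
    List (JVal × Schema) :=
  members.flatMap fun m => kvs.filterMap fun kv =>
    if m.1 = kv.1 then some (m.2, kv.2) else none

def matchedNames (members : List (String × JVal)) (kvs : List (String × Schema)) :
    Finset Ann :=
  ((members.filter fun m => kvs.any fun kv => kv.1 == m.1).map
    fun m => (Sum.inl m.1 : Ann)).toFinset

/-- The pairs (member value, subschema) matched by a `patternProperties` keyword. -/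
def patMatchedPairs (E : Env) (members : List (String × JVal))
    (kvs : List (String × Schema)) : List (JVal × Schema) :=
  members.flatMap fun m => kvs.filterMap fun kv =>
    if E.lang kv.1 m.1 then some (m.2, kv.2) else none

def patMatchedNames (E : Env) (members : List (String × JVal))
    (kvs : List (String × Schema)) : Finset Ann :=
  ((members.filter fun m => kvs.any fun kv => E.lang kv.1 m.1).map
    fun m => (Sum.inl m.1 : Ann)).toFinset

/-- Object members whose name is matched by no adjacent
`properties`/`patternProperties` keyword (used by `additionalProperties`). -/
def unmatchedMembers (E : Env) (Ks : List Keyword) (members : List (String × JVal)) :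
    List (String × JVal) :=
  members.filter fun m => !(keyMatchedB E Ks m.1)

/-- Array items whose (1-based) position is not among the accumulated annotations
(used by `unevaluatedItems`). -/
def unevalIdx (is : List JVal) (κ : Finset Ann) : List JVal :=
  ((is.zipIdx.map Prod.swap).filter fun p => !(decide ((Sum.inr (p.1 + 1) : Ann) ∈ κ))).map (·.2)

/-- Object members whose name is not among the accumulated annotations
(used by `unevaluatedProperties`). -/
def unevalMembers (members : List (String × JVal)) (κ : Finset Ann) :
    List (String × JVal) :=
  members.filter fun m => !(decide ((Sum.inl m.1 : Ann) ∈ κ))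

mutual
  /-- The schema judgment `C, J ⊢S S → (r, κ)`. -/
  inductive SJudg (E : Env) : Ctx → JVal → Schema → Bool → Finset Ann → Prop
    | tru {C J} : SJudg E C J .tru true ∅
    | fls {C J} : SJudg E C J .fls false ∅
    | objT {C J Ks κ} : LJudg E C J Ks true κ → SJudg E C J (.obj Ks) true κ
    | objF {C J Ks κ} : LJudg E C J Ks false κ → SJudg E C J (.obj Ks) false ∅

  /-- The keyword judgment `C, J ⊢K K → (r, κ)`. -/
  inductive KJudg (E : Env) : Ctx → JVal → Keyword → Bool → Finset Ann → Prop
    | type {C J t} : KJudg E C J (.type t) (typeOf J == t) ∅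
    | minimumTriv {C J q} : typeOf J ≠ .number → KJudg E C J (.minimum q) true ∅
    | minimum {C d q} : KJudg E C (.num d) (.minimum q) (decide (q ≤ d)) ∅
    | patternTriv {C J p} : typeOf J ≠ .string → KJudg E C J (.pattern p) true ∅
    | pattern {C s p} : KJudg E C (.str s) (.pattern p) (E.lang p s) ∅
    | anchor {C J a} : KJudg E C J (.anchor a) true ∅
    | dynamicAnchor {C J a} : KJudg E C J (.dynamicAnchor a) true ∅
    | id {C J u} : KJudg E C J (.id u) true ∅
    | defs {C J kvs} : KJudg E C J (.defs kvs) true ∅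
    | anyOf {C J l} (rs : List (Bool × Finset Ann)) :
        rs.length = l.length →
        (∀ i (h1 : i < l.length) (h2 : i < rs.length),
          SJudg E C J (l.get ⟨i, h1⟩) (rs.get ⟨i, h2⟩).1 (rs.get ⟨i, h2⟩).2) →
        KJudg E C J (.anyOf l) (rs.any (·.1)) (listUnion (rs.map (·.2)))
    | allOf {C J l} (rs : List (Bool × Finset Ann)) :
        rs.length = l.length →
        (∀ i (h1 : i < l.length) (h2 : i < rs.length),
          SJudg E C J (l.get ⟨i, h1⟩) (rs.get ⟨i, h2⟩).1 (rs.get ⟨i, h2⟩).2) →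
        KJudg E C J (.allOf l) (rs.all (·.1)) (listUnion (rs.map (·.2)))
    | oneOf {C J l} (rs : List (Bool × Finset Ann)) :
        rs.length = l.length →
        (∀ i (h1 : i < l.length) (h2 : i < rs.length),
          SJudg E C J (l.get ⟨i, h1⟩) (rs.get ⟨i, h2⟩).1 (rs.get ⟨i, h2⟩).2) →
        KJudg E C J (.oneOf l) (rs.countP (·.1) == 1) (listUnion (rs.map (·.2)))
    | not {C J S r σ} : SJudg E C J S r σ → KJudg E C J (.not S) (!r) σ
    | propertiesTriv {C J kvs} : typeOf J ≠ .object → KJudg E C J (.properties kvs) true ∅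
    | properties {C members kvs} (rs : List (Bool × Finset Ann)) :
        rs.length = (matchedPairs members kvs).length →
        (∀ i (h1 : i < (matchedPairs members kvs).length) (h2 : i < rs.length),
          SJudg E C ((matchedPairs members kvs).get ⟨i, h1⟩).1
            ((matchedPairs members kvs).get ⟨i, h1⟩).2
            (rs.get ⟨i, h2⟩).1 (rs.get ⟨i, h2⟩).2) →
        KJudg E C (.obj members) (.properties kvs) (rs.all (·.1)) (matchedNames members kvs)
    | patternPropertiesTriv {C J kvs} : typeOf J ≠ .object →
        KJudg E C J (.patternProperties kvs) true ∅
    | patternProperties {C members kvs} (rs : List (Bool × Finset Ann)) :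
        rs.length = (patMatchedPairs E members kvs).length →
        (∀ i (h1 : i < (patMatchedPairs E members kvs).length) (h2 : i < rs.length),
          SJudg E C ((patMatchedPairs E members kvs).get ⟨i, h1⟩).1
            ((patMatchedPairs E members kvs).get ⟨i, h1⟩).2
            (rs.get ⟨i, h2⟩).1 (rs.get ⟨i, h2⟩).2) →
        KJudg E C (.obj members) (.patternProperties kvs) (rs.all (·.1))
          (patMatchedNames E members kvs)
    | ref {C J u f S' r σ} :
        E.get (E.load u) f = some S' →
        SJudg E (saturate C u) J S' r σ →
        KJudg E C J (.ref u f) r σ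
    | dynamicRefAsRef {C J u f S' r σ} :
        E.dget (E.load u) f = none →
        E.get (E.load u) f = some S' →
        SJudg E (saturate C u) J S' r σ →
        KJudg E C J (.dynamicRef u f) r σ
    | dynamicRef {C J u f v S' r σ} :
        (E.dget (E.load u) f).isSome →
        fstURI E (saturate C u) f = some v →
        E.dget (E.load v) f = some S' →
        SJudg E (saturate C v) J S' r σ →
        KJudg E C J (.dynamicRef u f) r σ

  /-- The keyword-list judgment `C, J ⊢L ⟨K1,…,Kn⟩ → (r, κ)`; keywords are
  evaluated left to right, and the four dependent keywords exploit the
  annotations accumulated by the preceding keywords. -/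
  inductive LJudg (E : Env) : Ctx → JVal → List Keyword → Bool → Finset Ann → Prop
    | nil {C J} : LJudg E C J [] true ∅
    | snocIndep {C J Ks K rl κl r κ} :
        K.isDependent = false →
        LJudg E C J Ks rl κl →
        KJudg E C J K r κ →
        LJudg E C J (Ks ++ [K]) (rl && r) (κl ∪ κ)
    | additionalPropertiesTriv {C J Ks S rl κl} :
        typeOf J ≠ .object →
        LJudg E C J Ks rl κl →
        LJudg E C J (Ks ++ [.additionalProperties S]) rl κl
    | additionalProperties {C members Ks S rl κl} (rs : List (Bool × Finset Ann)) :
        LJudg E C (.obj members) Ks rl κl →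
        rs.length = (unmatchedMembers E Ks members).length →
        (∀ i (h1 : i < (unmatchedMembers E Ks members).length) (h2 : i < rs.length),
          SJudg E C ((unmatchedMembers E Ks members).get ⟨i, h1⟩).2 S
            (rs.get ⟨i, h2⟩).1 (rs.get ⟨i, h2⟩).2) →
        LJudg E C (.obj members) (Ks ++ [.additionalProperties S])
          (rl && rs.all (·.1)) (objNames members)
    | unevaluatedPropertiesTriv {C J Ks S rl κl} :
        typeOf J ≠ .object →
        LJudg E C J Ks rl κl →
        LJudg E C J (Ks ++ [.unevaluatedProperties S]) rl κl
    | unevaluatedProperties {C members Ks S rl κl} (rs : List (Bool × Finset Ann)) :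
        LJudg E C (.obj members) Ks rl κl →
        rs.length = (unevalMembers members κl).length →
        (∀ i (h1 : i < (unevalMembers members κl).length) (h2 : i < rs.length),
          SJudg E C ((unevalMembers members κl).get ⟨i, h1⟩).2 S
            (rs.get ⟨i, h2⟩).1 (rs.get ⟨i, h2⟩).2) →
        LJudg E C (.obj members) (Ks ++ [.unevaluatedProperties S])
          (rl && rs.all (·.1)) (objNames members)
    | itemsTriv {C J Ks S rl κl} :
        typeOf J ≠ .array →
        LJudg E C J Ks rl κl →
        LJudg E C J (Ks ++ [.items S]) rl κl
    | items {C is Ks S rl κl} (rs : List (Bool × Finset Ann)) :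
        LJudg E C (.arr is) Ks rl κl →
        rs.length = is.length →
        (∀ i (h1 : i < is.length) (h2 : i < rs.length),
          SJudg E C (is.get ⟨i, h1⟩) S (rs.get ⟨i, h2⟩).1 (rs.get ⟨i, h2⟩).2) →
        LJudg E C (.arr is) (Ks ++ [.items S]) (rl && rs.all (·.1))
          (arrPositions is.length)
    | unevaluatedItemsTriv {C J Ks S rl κl} :
        typeOf J ≠ .array →
        LJudg E C J Ks rl κl →
        LJudg E C J (Ks ++ [.unevaluatedItems S]) rl κl
    | unevaluatedItems {C is Ks S rl κl} (rs : List (Bool × Finset Ann)) :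
        LJudg E C (.arr is) Ks rl κl →
        rs.length = (unevalIdx is κl).length →
        (∀ i (h1 : i < (unevalIdx is κl).length) (h2 : i < rs.length),
          SJudg E C ((unevalIdx is κl).get ⟨i, h1⟩) S
            (rs.get ⟨i, h2⟩).1 (rs.get ⟨i, h2⟩).2) →
        LJudg E C (.arr is) (Ks ++ [.unevaluatedItems S]) (rl && rs.all (·.1))
          (arrPositions is.length)
end

end MJS
namespace MJS

/-- The subschemas occurring directly inside a keyword. -/
def Keyword.subschemas : Keyword → List Schema
  | .not s => [s]
  | .anyOf l => l
  | .allOf l => l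
  | .oneOf l => l
  | .properties kvs => kvs.map (·.2)
  | .patternProperties kvs => kvs.map (·.2)
  | .defs kvs => kvs.map (·.2)
  | .additionalProperties s => [s]
  | .items s => [s]
  | .unevaluatedProperties s => [s]
  | .unevaluatedItems s => [s]
  | _ => []

/-- `S'` is an immediate subschema of `S`. -/
def ImmSub (S' S : Schema) : Prop := ∃ K ∈ S.keywords, S' ∈ K.subschemas

/-- `Subschema S' S`: `S'` is a (reflexive, transitive) subschema of `S`. -/
def Subschema : Schema → Schema → Prop := Relation.ReflTransGen ImmSub

/-- The subschemas occurring directly inside a boolean applicator keyword. -/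
def Keyword.boolSubschemas : Keyword → List Schema
  | .not s => [s]
  | .anyOf l => l
  | .allOf l => l
  | .oneOf l => l
  | _ => []

def ImmBoolSub (S' S : Schema) : Prop := ∃ K ∈ S.keywords, S' ∈ K.boolSubschemas

/-- `BoolSub S' S`: `S'` is reachable from `S` through boolean applicator
keywords only. -/
def BoolSub : Schema → Schema → Prop := Relation.ReflTransGen ImmBoolSub

/-- `Si` unguardedly references `Sj`: some subschema `S'` of `Si`, with only
boolean applicators on the path from `Si` to `S'`, contains a keyword
`$ref : absURI#f` with `get (load absURI) f = Sj`, or contains a keyword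
`$dynamicRef : absURI#f` while `Sj` contains `$dynamicAnchor : f`. -/
def UnguardedRef (E : Env) (Si Sj : Schema) : Prop :=
  ∃ S', BoolSub S' Si ∧
    ((∃ u f, Keyword.ref u f ∈ S'.keywords ∧ E.get (E.load u) f = some Sj) ∨
     (∃ u f, Keyword.dynamicRef u f ∈ S'.keywords ∧
        Keyword.dynamicAnchor f ∈ Sj.keywords))

/-- A closed schema is well-formed when the graph of the unguardedly-references
relation on its subschemas is acyclic. -/
def WellFormed (E : Env) (S0 : Schema) : Prop :=
  ∀ S, ¬ Relation.TransGen
    (fun a b => Subschema a S0 ∧ Subschema b S0 ∧ UnguardedRef E a b) S S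

/-- A schema is closed when every resource recursively reachable from it
through (static or dynamic) references is embedded in it. -/
def Closed (E : Env) (S0 : Schema) : Prop :=
  ∀ S, Subschema S S0 → ∀ u f,
    (Keyword.ref u f ∈ S.keywords ∨ Keyword.dynamicRef u f ∈ S.keywords) →
    Subschema (E.load u) S0

/-- A context formed using URIs of resources of `S0`. -/
def CtxOf (E : Env) (S0 : Schema) (C : Ctx) : Prop :=
  C.Nodup ∧ ∀ u ∈ C, Subschema (E.load u) S0

/-- Coherence of the environment: `get R f` and `dget R f` return subschemas
of `R`, and `dget R f` returns a subschema carrying `$dynamicAnchor : f`. -/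
def EnvCoherent (E : Env) : Prop :=
  (∀ R f S, E.get R f = some S → Subschema S R) ∧
  (∀ R f S, E.dget R f = some S →
    Subschema S R ∧ Keyword.dynamicAnchor f ∈ S.keywords)

end MJS
namespace MJS

/-- A keyword is logical when it is among `anyOf`, `allOf`, `oneOf`, `not`,
`$ref`, `$dynamicRef`, `$anchor`, `$dynamicAnchor`, `$id`, `$defs`. -/
def Keyword.isLogical : Keyword → Prop
  | .anyOf _ => True
  | .allOf _ => True
  | .oneOf _ => True
  | .not _ => True
  | .ref _ _ => True
  | .dynamicRef _ _ => True
  | .anchor _ => True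
  | .dynamicAnchor _ => True
  | .id _ => True
  | .defs _ => True
  | _ => False

/-- All subschemas of `S0` are `true`, `false`, or objects whose keywords are
logical. -/
def Logical (S0 : Schema) : Prop :=
  ∀ S, Subschema S S0 → ∀ K ∈ S.keywords, K.isLogical

/-
Logical keywords never look at the instance: terminal assertions and annotation-dependent
keywords are excluded, `anyOf`/`allOf`/`oneOf`/`not` only combine the results of their
subschemas, and references are resolved from the context alone. So, by induction on one
derivation, every derivation for the same schema and context, on any instance, returns the
same boolean, and annotations are unions of empty sets. The induction keeps the evaluated
schema inside `S` and the context made of resources of `S`; closedness and coherence of the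
environment preserve this across references.
-/

def SEvalsTo (E : Env) (C : Ctx) (S : Schema) (r : Bool) : Prop :=
  ∀ J r' κ, SJudg E C J S r' κ → r' = r ∧ κ = ∅

def KEvalsTo (E : Env) (C : Ctx) (K : Keyword) (r : Bool) : Prop :=
  ∀ J r' κ, KJudg E C J K r' κ → r' = r ∧ κ = ∅

def LEvalsTo (E : Env) (C : Ctx) (Ks : List Keyword) (r : Bool) : Prop :=
  ∀ J r' κ, LJudg E C J Ks r' κ → r' = r ∧ κ = ∅

section EvalsTo

variable {E : Env} {C : Ctx}

theorem listUnion_eq_empty {l : List (Finset Ann)} (h : ∀ s ∈ l, s = ∅) :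
    listUnion l = ∅ := by
  induction l with
  | nil => rfl
  | cons s l ih => simp_all [listUnion]

theorem eq_and_listUnion_eq_empty_of_SEvalsTo {J J' : JVal} {l : List Schema}
    {rs rs' : List (Bool × Finset Ann)} (hlen : rs.length = l.length)
    (hd : ∀ i (h1 : i < l.length) (h2 : i < rs.length),
      SJudg E C J (l.get ⟨i, h1⟩) (rs.get ⟨i, h2⟩).1 (rs.get ⟨i, h2⟩).2)
    (hev : ∀ i (h1 : i < l.length) (h2 : i < rs.length),
      SEvalsTo E C (l.get ⟨i, h1⟩) (rs.get ⟨i, h2⟩).1)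
    (hlen' : rs'.length = l.length)
    (hd' : ∀ i (h1 : i < l.length) (h2 : i < rs'.length),
      SJudg E C J' (l.get ⟨i, h1⟩) (rs'.get ⟨i, h2⟩).1 (rs'.get ⟨i, h2⟩).2) :
    rs' = rs ∧ listUnion (rs.map (·.2)) = ∅ := by
  have hsnd : ∀ i (h2 : i < rs.length), (rs.get ⟨i, h2⟩).2 = ∅ := fun i h2 =>
    (hev i (hlen ▸ h2) h2 _ _ _ (hd i (hlen ▸ h2) h2)).2
  refine ⟨List.ext_get (by omega) fun i h2' h2 => ?_, ?_⟩
  · obtain ⟨hfst, hsnd'⟩ := hev i (hlen ▸ h2) h2 _ _ _ (hd' i (hlen ▸ h2) h2')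
    exact Prod.ext hfst (hsnd'.trans (hsnd i h2).symm)
  · refine listUnion_eq_empty fun s hs => ?_
    obtain ⟨p, hp, rfl⟩ := List.mem_map.1 hs
    obtain ⟨⟨i, h2⟩, rfl⟩ := List.get_of_mem hp
    exact hsnd i h2

theorem SEvalsTo.tru : SEvalsTo E C .tru true := by
  rintro J r κ ⟨⟩
  exact ⟨rfl, rfl⟩

theorem SEvalsTo.fls : SEvalsTo E C .fls false := by
  rintro J r κ ⟨⟩
  exact ⟨rfl, rfl⟩

theorem SEvalsTo.obj {Ks : List Keyword} {r : Bool} (h : LEvalsTo E C Ks r) :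
    SEvalsTo E C (.obj Ks) r := by
  intro J r' κ hS
  cases hS with
  | objT hL => exact h _ _ _ hL
  | objF hL => exact ⟨(h _ _ _ hL).1, rfl⟩

theorem KEvalsTo.not {S : Schema} {r : Bool} (h : SEvalsTo E C S r) :
    KEvalsTo E C (.not S) (!r) := by
  intro J r' κ hJ
  cases hJ with | not hS =>
  obtain ⟨rfl, rfl⟩ := h _ _ _ hS
  exact ⟨rfl, rfl⟩

theorem KEvalsTo.ref {u f : String} {S' : Schema} {r : Bool}
    (hget : E.get (E.load u) f = some S') (h : SEvalsTo E (saturate C u) S' r) :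
    KEvalsTo E C (.ref u f) r := by
  intro J r' κ hJ
  cases hJ with | ref hget' hS =>
  cases hget.symm.trans hget'
  exact h _ _ _ hS

theorem KEvalsTo.dynamicRefAsRef {u f : String} {S' : Schema} {r : Bool}
    (hdget : E.dget (E.load u) f = none) (hget : E.get (E.load u) f = some S')
    (h : SEvalsTo E (saturate C u) S' r) : KEvalsTo E C (.dynamicRef u f) r := by
  intro J r' κ hJ
  cases hJ with
  | dynamicRefAsRef _ hget' hS =>
    cases hget.symm.trans hget'
    exact h _ _ _ hS
  | dynamicRef hsome _ _ _ => simp [hdget] at hsome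

theorem KEvalsTo.dynamicRef {u f v : String} {S' : Schema} {r : Bool}
    (hsome : (E.dget (E.load u) f).isSome) (hfst : fstURI E (saturate C u) f = some v)
    (hdget : E.dget (E.load v) f = some S') (h : SEvalsTo E (saturate C v) S' r) :
    KEvalsTo E C (.dynamicRef u f) r := by
  intro J r' κ hJ
  cases hJ with
  | dynamicRefAsRef hnone _ _ => simp [hnone] at hsome
  | dynamicRef _ hfst' hdget' hS =>
    cases hfst.symm.trans hfst'
    cases hdget.symm.trans hdget'
    exact h _ _ _ hS

theorem LEvalsTo.nil : LEvalsTo E C [] true := by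
  intro J r κ h
  generalize hL : ([] : List Keyword) = L at h
  cases h with
  | nil => exact ⟨rfl, rfl⟩
  | _ => simp at hL

theorem LJudg.snoc_inv {J : JVal} {Ks : List Keyword} {K : Keyword} {r : Bool}
    {κ : Finset Ann} (h : LJudg E C J (Ks ++ [K]) r κ) (hK : K.isDependent = false) :
    ∃ rl κl r₀ κ₀, LJudg E C J Ks rl κl ∧ KJudg E C J K r₀ κ₀ ∧
      r = (rl && r₀) ∧ κ = κl ∪ κ₀ := by
  generalize hL : Ks ++ [K] = L at h
  cases h with
  | nil => simp at hL
  | snocIndep _ hl hk =>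
    obtain ⟨rfl, hK'⟩ := List.append_inj' hL rfl
    cases hK'
    exact ⟨_, _, _, _, hl, hk, rfl, rfl⟩
  | _ =>
    obtain ⟨-, hK'⟩ := List.append_inj' hL rfl
    cases hK'
    cases hK

theorem LEvalsTo.snoc {Ks : List Keyword} {K : Keyword} {rl r : Bool}
    (hK : K.isDependent = false) (hl : LEvalsTo E C Ks rl) (hk : KEvalsTo E C K r) :
    LEvalsTo E C (Ks ++ [K]) (rl && r) := by
  intro J r' κ h
  obtain ⟨rl', κl, r₀, κ₀, hl', hk', rfl, rfl⟩ := h.snoc_inv hK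
  obtain ⟨rfl, rfl⟩ := hl _ _ _ hl'
  obtain ⟨rfl, rfl⟩ := hk _ _ _ hk'
  exact ⟨rfl, by simp⟩

end EvalsTo

def Keyword.OccursIn (K : Keyword) (S : Schema) : Prop :=
  ∃ S', Subschema S' S ∧ K ∈ S'.keywords

section Scope

variable {E : Env} {S : Schema}

theorem Keyword.OccursIn.isLogical {K : Keyword} (hlog : Logical S) (hK : K.OccursIn S) :
    K.isLogical :=
  let ⟨_, hS', hK⟩ := hK
  hlog _ hS' _ hK

theorem Keyword.OccursIn.subschema {K : Keyword} {S' : Schema} (hK : K.OccursIn S)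
    (hS' : S' ∈ K.subschemas) : Subschema S' S :=
  let ⟨_, hS, hK⟩ := hK
  (Relation.ReflTransGen.single ⟨K, hK, hS'⟩).trans hS

theorem Closed.load_subschema_of_ref {u f : String} (hclosed : Closed E S)
    (hK : (Keyword.ref u f).OccursIn S) : Subschema (E.load u) S :=
  let ⟨_, hS, hK⟩ := hK
  hclosed _ hS u f (.inl hK)

theorem Closed.load_subschema_of_dynamicRef {u f : String} (hclosed : Closed E S)
    (hK : (Keyword.dynamicRef u f).OccursIn S) : Subschema (E.load u) S :=
  let ⟨_, hS, hK⟩ := hK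
  hclosed _ hS u f (.inr hK)

theorem CtxOf.saturate {C : Ctx} {u : String} (hC : CtxOf E S C)
    (hu : Subschema (E.load u) S) : CtxOf E S (saturate C u) := by
  unfold MJS.saturate
  split_ifs with huC
  · exact hC
  · refine ⟨hC.1.append (List.nodup_singleton u) (by simpa using huC), ?_⟩
    simpa [or_imp, forall_and, hu] using hC.2

end Scope

theorem SJudg.evalsTo_of_logical {E : Env} {S : Schema} (hcoh : EnvCoherent E)
    (hclosed : Closed E S) (hlog : Logical S) {C : Ctx} {J : JVal} {S' : Schema}
    {r : Bool} {κ : Finset Ann} (h : SJudg E C J S' r κ) :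
    Subschema S' S → CtxOf E S C → SEvalsTo E C S' r := by
  induction h using SJudg.rec
    (motive_2 := fun C _ K r _ _ => K.OccursIn S → CtxOf E S C → KEvalsTo E C K r)
    (motive_3 := fun C _ Ks r _ _ =>
      (∀ K ∈ Ks, K.OccursIn S) → CtxOf E S C → LEvalsTo E C Ks r)
  case tru => exact fun _ _ => SEvalsTo.tru
  case fls => exact fun _ _ => SEvalsTo.fls
  case objT | objF =>
    rename_i ih
    exact fun hS' hC => SEvalsTo.obj (ih (fun _ hK => ⟨_, hS', hK⟩) hC)
  case type | minimumTriv | minimum | patternTriv | pattern | propertiesTriv | properties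
      | patternPropertiesTriv | patternProperties =>
    rename_i hK _
    exact (hK.isLogical hlog).elim
  case additionalPropertiesTriv | additionalProperties | unevaluatedPropertiesTriv
      | unevaluatedProperties | itemsTriv | items | unevaluatedItemsTriv | unevaluatedItems =>
    rename_i hKs _
    exact ((hKs _ List.mem_concat_self).isLogical hlog).elim
  case anchor | dynamicAnchor | id | defs =>
    intro J r κ hJ
    cases hJ
    exact ⟨rfl, rfl⟩
  case anyOf _ _ l rs hlen hd ih hK hC | allOf _ _ l rs hlen hd ih hK hC
      | oneOf _ _ l rs hlen hd ih hK hC =>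
    have hev := fun i h1 h2 => ih i h1 h2 (hK.subschema (List.get_mem l ⟨i, h1⟩)) hC
    intro J' r' κ' hJ'
    cases hJ'
    rename_i rs' hlen' hd'
    obtain ⟨rfl, hκ⟩ := eq_and_listUnion_eq_empty_of_SEvalsTo hlen hd hev hlen' hd'
    exact ⟨rfl, hκ⟩
  case not _ _ _ _ _ _ ih hK hC =>
    exact KEvalsTo.not (ih (hK.subschema (List.mem_singleton_self _)) hC)
  case ref _ _ _ f _ _ _ hget _ ih hK hC =>
    have hu := hclosed.load_subschema_of_ref hK
    exact KEvalsTo.ref hget (ih ((hcoh.1 _ f _ hget).trans hu) (hC.saturate hu))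
  case dynamicRefAsRef _ _ _ f _ _ _ hdget hget _ ih hK hC =>
    have hu := hclosed.load_subschema_of_dynamicRef hK
    exact KEvalsTo.dynamicRefAsRef hdget hget
      (ih ((hcoh.1 _ f _ hget).trans hu) (hC.saturate hu))
  case dynamicRef _ _ _ f v _ _ _ hsome hfst hdget _ ih hK hC =>
    have hu := hclosed.load_subschema_of_dynamicRef hK
    -- `fstURI` picks `v` from `C +? u`, all of whose URIs load resources of `S`
    have hv : Subschema (E.load v) S := (hC.saturate hu).2 v (List.mem_of_find?_eq_some hfst)
    exact KEvalsTo.dynamicRef hsome hfst hdget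
      (ih ((hcoh.2 _ f _ hdget).1.trans hv) (hC.saturate hv))
  case nil => exact LEvalsTo.nil
  case snocIndep _ _ _ _ _ _ _ _ hdep _ _ ihl ihk hKs hC =>
    exact LEvalsTo.snoc hdep (ihl (fun K hK => hKs K (List.mem_append_left _ hK)) hC)
      (ihk (hKs _ List.mem_concat_self) hC)

/-- Schemas built only from logical operators are trivial:
the validation result does not depend on the instance and no annotations are
produced. -/
theorem statement5 (E : Env) (S : Schema)
    (hcoh : EnvCoherent E) (hclosed : Closed E S) (hlog : Logical S) :
    ∀ C : Ctx, CtxOf E S C → ∀ (J J' : JVal) (r r' : Bool) (κ κ' : Finset Ann),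
      SJudg E C J S r κ → SJudg E C J' S r' κ' →
      r = r' ∧ κ = ∅ ∧ κ' = ∅ := by
  intro C hC J J' r r' κ κ' h h'
  have hev := h.evalsTo_of_logical hcoh hclosed hlog .refl hC
  obtain ⟨-, hκ⟩ := hev J r κ h
  obtain ⟨rfl, hκ'⟩ := hev J' r' κ' h'
  exact ⟨rfl, hκ, hκ'⟩

end MJS
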